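/- Let G be a 2-connected chordal bipartite graph, uv a bisimplicial edge of G such that G ⊖ uv has a cut vertex s with N_G(v)\{u} = {s}. Then for every connected component F of (G ⊖ uv) − s, the vertex u has a neighbor in F. -/

import Mathlib

open SimpleGraph

variable {V : Type*}

/-- `S` is a vertex cut set of `G`: deleting the vertices of `S` disconnects the graph. -/
def SimpleGraph.IsVertexCutSet (G : SimpleGraph V) (S : Set V) : Prop :=
  ¬ (G.induce Sᶜ).Preconnected

open scoped Classical in
/-- The vertex connectivity of a finite simple graph: the minimum size of a vertex cut if
one exists (i.e. if the graph is not complete), and `|V| - 1` otherwise. -/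
noncomputable def SimpleGraph.vertexConnectivity [Finite V] (G : SimpleGraph V) : ℕ :=
  if ∃ S : Set V, G.IsVertexCutSet S then
    sInf {n | ∃ S : Set V, S.ncard = n ∧ G.IsVertexCutSet S}
  else Nat.card V - 1

/-- An edge `uv` is bisimplicial if `N(u) ∪ N(v)` induces a complete bipartite graph
with parts `N(u)` and `N(v)`. -/
def SimpleGraph.IsBisimplicialEdge (G : SimpleGraph V) (u v : V) : Prop :=
  G.Adj u v ∧ ∀ x y, G.Adj u x → G.Adj v y → x ≠ y → G.Adj x y

/-- A cycle (closed walk) has a chord: an edge of `G` joining two vertices of the cycle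
that is not an edge of the cycle. -/
def SimpleGraph.CycleHasChord (G : SimpleGraph V) {a : V} (c : G.Walk a a) : Prop :=
  ∃ x y, x ∈ c.support ∧ y ∈ c.support ∧ G.Adj x y ∧ s(x, y) ∉ c.edges

/-- A graph is chordal bipartite if it is bipartite and every cycle of length at least 6
has a chord. -/
def SimpleGraph.ChordalBipartite (G : SimpleGraph V) : Prop :=
  G.Colorable 2 ∧ ∀ ⦃a : V⦄ (c : G.Walk a a), c.IsCycle → 6 ≤ c.length → G.CycleHasChord c

/-!
Since `G` is 2-connected, `G - s` is connected, so a path in `G - s` from a component `F` of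
`G - {u, v, s}` to `u` must leave `F` through an edge into `{u, v}`. An edge from `F` into `v`
is impossible because `s` is the only neighbour of `v` besides `u`; hence `u` has a neighbour
in `F`.
-/

namespace SimpleGraph

theorem vertexConnectivity_le_ncard [Finite V] {G : SimpleGraph V} {S : Set V}
    (hS : G.IsVertexCutSet S) : G.vertexConnectivity ≤ S.ncard := by
  rw [vertexConnectivity, if_pos ⟨S, hS⟩]
  exact Nat.sInf_le ⟨S, rfl, hS⟩

theorem preconnected_induce_compl_of_ncard_lt [Finite V] {G : SimpleGraph V} {S : Set V}
    (hS : S.ncard < G.vertexConnectivity) : (G.induce Sᶜ).Preconnected := by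
  by_contra hcut
  exact (vertexConnectivity_le_ncard hcut).not_gt hS

theorem ComponentCompl.exists_adj_diff_of_preconnected {G : SimpleGraph V} {S K : Set V}
    (hpre : (G.induce Sᶜ).Preconnected) (hSK : S ⊆ K) (hKS : (K \ S).Nonempty)
    (C : G.ComponentCompl K) : ∃ x ∈ C, ∃ y ∈ K \ S, G.Adj x y := by
  obtain ⟨k, hkK, hkS⟩ := hKS
  obtain ⟨w, hwK, rfl⟩ := C.exists_eq_mk
  have hwC := G.componentComplMk_mem hwK
  obtain ⟨p⟩ := hpre ⟨w, fun hwS => hwK (hSK hwS)⟩ ⟨k, hkS⟩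
  obtain ⟨⟨⟨x, y⟩, hxy⟩, -, hxC, hyC⟩ := p.exists_boundary_dart
    {a | a.val ∈ G.componentComplMk hwK} hwC fun hkC => notMem_of_mem hkC hkK
  have hyK : y.val ∈ K := by
    by_contra hyK
    exact hyC (mem_of_adj _ _ hxC hyK hxy)
  exact ⟨x, hxC, y, ⟨hyK, y.prop⟩, hxy⟩

end SimpleGraph

theorem stmt14_general [Finite V] (G : SimpleGraph V)
    (h2 : 2 ≤ G.vertexConnectivity) (u v s : V)
    (hNv : G.neighborSet v \ {u} = {s}) :
    ∀ c : (G.induce (({u, v, s} : Set V)ᶜ)).ConnectedComponent,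
      ∃ x, ∃ hx : x ∈ (({u, v, s} : Set V)ᶜ),
        G.Adj u x ∧ (⟨x, hx⟩ : (({u, v, s} : Set V)ᶜ : Set V)) ∈ c.supp := by
  intro c
  have hsu : s ≠ u := (hNv.ge (Set.mem_singleton s)).2
  have hpre : (G.induce ({s} : Set V)ᶜ).Preconnected :=
    preconnected_induce_compl_of_ncard_lt (by rw [Set.ncard_singleton]; omega)
  obtain ⟨x, hxc, y, ⟨hyK, hys⟩, hxy⟩ :=
    ComponentCompl.exists_adj_diff_of_preconnected (C := c) hpre (by simp) ⟨u, by simp, hsu.symm⟩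
  obtain ⟨hxK, hxc⟩ := hxc
  simp only [Set.mem_insert_iff, Set.mem_singleton_iff] at hyK hys
  obtain rfl | rfl | rfl := hyK
  · exact ⟨x, hxK, hxy.symm, hxc⟩
  · have hxNv : x ∈ G.neighborSet y \ {u} :=
      ⟨hxy.symm, fun hxu => hxK (by simp [Set.mem_singleton_iff.mp hxu])⟩
    rw [hNv, Set.mem_singleton_iff] at hxNv
    exact (hxK (by simp [hxNv])).elim
  · exact absurd rfl hys

theorem stmt14 [Finite V] (G : SimpleGraph V) (hcb : G.ChordalBipartite)
    (h2 : 2 ≤ G.vertexConnectivity) (u v s : V)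
    (huv : G.IsBisimplicialEdge u v) (hs : s ∈ (({u, v} : Set V)ᶜ))
    (hcut : ¬ (G.induce (({u, v, s} : Set V)ᶜ)).Preconnected)
    (hNv : G.neighborSet v \ {u} = {s}) :
    ∀ c : (G.induce (({u, v, s} : Set V)ᶜ)).ConnectedComponent,
      ∃ x, ∃ hx : x ∈ (({u, v, s} : Set V)ᶜ),
        G.Adj u x ∧ (⟨x, hx⟩ : (({u, v, s} : Set V)ᶜ : Set V)) ∈ c.supp :=
  stmt14_general G h2 u v s hNv
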